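/- In the regenerative stopping problem where δ(s, x, stop) = δ(s_0, x) for all states s, the set of states reachable at step j of the hindsight dynamic program (starting from s_0 and processing data points x_1,…,x_j under all possible action sequences) has cardinality at most j + 1. -/
import Mathlib


/-- State trajectory of the regenerative stopping problem: actions are `Bool`
(`true` = stop, `false` = wait), the stop action resets to `s₀` before the data
transition, i.e. `δ(s, x, stop) = δ(s₀, x)` is independent of `s`. -/
def regenTraj {S X : Type*} (δ : S → X → S) (s₀ : S) (x : ℕ → X)
    (aseq : ℕ → Bool) : ℕ → S
  | 0 => s₀
  | k + 1 =>
    if aseq k then δ s₀ (x (k + 1))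
    else δ (regenTraj δ s₀ x aseq k) (x (k + 1))

lemma regenTraj_agree {S X : Type*} (δ : S → X → S) (s₀ : S) (x : ℕ → X)
    (a b : ℕ → Bool) (m : ℕ) :
    ∀ j, m ≤ j → regenTraj δ s₀ x a m = regenTraj δ s₀ x b m →
      (∀ k, m ≤ k → k < j → a k = b k) →
      regenTraj δ s₀ x a j = regenTraj δ s₀ x b j := by
  intro j
  induction j with
  | zero =>
    intro hm h0 _
    have : m = 0 := Nat.le_zero.mp hm
    subst this; exact h0
  | succ n ih =>
    intro hm h0 hag
    rcases Nat.eq_or_lt_of_le hm with h | h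
    · exact h ▸ h0
    · have hmn : m ≤ n := Nat.lt_succ_iff.mp h
      have hn := ih hmn h0 (fun k hk1 hk2 => hag k hk1 (Nat.lt_succ_of_lt hk2))
      have hab : a n = b n := hag n hmn (Nat.lt_succ_self n)
      simp only [regenTraj, hn, hab]

/-- The set of states reachable at step `j` of the hindsight dynamic program
(from `s₀`, processing `x₁, …, x_j` under all action sequences) is finite with
cardinality at most `j + 1`. -/
theorem stmt_7 {S X : Type*} (δ : S → X → S) (s₀ : S) (x : ℕ → X) (j : ℕ) :
    ({s : S | ∃ aseq : ℕ → Bool, regenTraj δ s₀ x aseq j = s}).Finite ∧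
    ({s : S | ∃ aseq : ℕ → Bool, regenTraj δ s₀ x aseq j = s}).ncard ≤ j + 1 := by
  classical
  have hsub : {s : S | ∃ aseq : ℕ → Bool, regenTraj δ s₀ x aseq j = s} ⊆
      Set.range (fun i : Fin (j + 1) =>
        regenTraj δ s₀ x (fun k => decide (k + 1 = i.val)) j) := by
    rintro s ⟨a, rfl⟩
    by_cases hex : ∃ k, k < j ∧ a k = true
    · obtain ⟨k₀, hk₀, hak₀⟩ := hex
      set m := Nat.findGreatest (fun k => a k = true) (j - 1) with hm
      have hPm : a m = true := by
        rw [hm]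
        exact Nat.findGreatest_spec (P := fun k => a k = true)
          (by omega : k₀ ≤ j - 1) hak₀
      have hmj : m < j := by
        have := Nat.findGreatest_le (P := fun k => a k = true) (j - 1)
        omega
      have hmax : ∀ k, m < k → k < j → a k = false := by
        intro k hk1 hk2
        by_contra hc
        exact Nat.findGreatest_is_greatest hk1 (by omega : k ≤ j - 1)
          (by simpa using hc)
      refine ⟨⟨m + 1, by omega⟩, ?_⟩
      show regenTraj δ s₀ x (fun k => decide (k + 1 = m + 1)) j
          = regenTraj δ s₀ x a j
      refine regenTraj_agree δ s₀ x _ a (m + 1) j hmj ?_ ?_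
      · simp [regenTraj, hPm]
      · intro k hk1 hk2
        rw [hmax k (by omega) hk2]
        simp only [decide_eq_false_iff_not]
        omega
    · refine ⟨⟨0, by omega⟩, ?_⟩
      show regenTraj δ s₀ x (fun k => decide (k + 1 = 0)) j
          = regenTraj δ s₀ x a j
      refine regenTraj_agree δ s₀ x _ a 0 j (Nat.zero_le j) rfl ?_
      intro k _ hk
      have : a k = false := by
        by_contra hc
        exact hex ⟨k, hk, by simpa using hc⟩
      rw [this]
      simp only [decide_eq_false_iff_not]
      omega
  have hfin : (Set.range (fun i : Fin (j + 1) =>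
      regenTraj δ s₀ x (fun k => decide (k + 1 = i.val)) j)).Finite :=
    Set.finite_range _
  refine ⟨hfin.subset hsub, ?_⟩
  calc ({s : S | ∃ aseq : ℕ → Bool, regenTraj δ s₀ x aseq j = s}).ncard
      ≤ _ := Set.ncard_le_ncard hsub hfin
    _ ≤ (Set.univ : Set (Fin (j + 1))).ncard := by
        rw [← Set.image_univ]
        exact Set.ncard_image_le Set.finite_univ
    _ = j + 1 := by rw [Set.ncard_univ, Nat.card_eq_fintype_card, Fintype.card_fin]
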